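/- Three-policy return-decomposition identity (proved in Appendix B of the paper): For any three stationary stochastic policies π, π̃, and π_b in a finite MDP with discount factor γ ∈ (0,1), J(π̃) − J(π_b) = E_{τ∼π̃}[ Σ_{t=0}^∞ γ^t A^{π̃|π}(s_t) ] − E_{τ∼π_b}[ Σ_{t=0}^∞ γ^t A^{π_b|π}(s_t) ], where the first expectation is over trajectories generated by π̃ from ρ0 and the second is over trajectories generated by π_b from ρ0. -/

import Mathlib

open scoped BigOperators

/-- A finite Markov decision process with state space `S`, action space `A`,
transition kernel `P`, reward `r`, initial distribution `ρ0`, discount `γ ∈ (0,1)`. -/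
structure MDP (S A : Type) [Fintype S] [Fintype A] where
  P : S → A → S → ℝ
  P_nonneg : ∀ s a s', 0 ≤ P s a s'
  P_sum_one : ∀ s a, (∑ s', P s a s') = 1
  r : S → A → ℝ
  ρ0 : S → ℝ
  ρ0_nonneg : ∀ s, 0 ≤ ρ0 s
  ρ0_sum_one : (∑ s, ρ0 s) = 1
  γ : ℝ
  γ_pos : 0 < γ
  γ_lt_one : γ < 1

/-- A stationary stochastic policy: a probability distribution over actions for each state. -/
structure Policy (S A : Type) [Fintype S] [Fintype A] where
  p : S → A → ℝ
  nonneg : ∀ s a, 0 ≤ p s a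
  sum_one : ∀ s, (∑ a, p s a) = 1

namespace MDP

variable {S A : Type} [Fintype S] [Fintype A]

/-- The distribution of the state at time `t`, starting from the initial distribution `μ`
and following policy `π`. -/
noncomputable def stateDist (M : MDP S A) (π : Policy S A) (μ : S → ℝ) : ℕ → S → ℝ
  | 0 => μ
  | (t + 1) => fun s' => ∑ s, ∑ a, M.stateDist π μ t s * π.p s a * M.P s a s'

/-- `E_{τ∼π}[ Σ_{t=0}^∞ γ^t f(s_t, a_t) ]` for trajectories started from the
initial state distribution `μ` and generated by policy `π`. -/
noncomputable def expSum (M : MDP S A) (π : Policy S A) (μ : S → ℝ) (f : S → A → ℝ) : ℝ :=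
  ∑' t : ℕ, M.γ ^ t * ∑ s, ∑ a, M.stateDist π μ t s * π.p s a * f s a

/-- The expected discounted return `J(π)`. -/
noncomputable def J (M : MDP S A) (π : Policy S A) : ℝ :=
  M.expSum π M.ρ0 M.r

/-- The value function `V_π(s)`. -/
noncomputable def V (M : MDP S A) [DecidableEq S] (π : Policy S A) (s : S) : ℝ :=
  M.expSum π (fun s' => if s' = s then 1 else 0) M.r

/-- The action-value function `Q_π(s,a)`. -/
noncomputable def Q (M : MDP S A) [DecidableEq S] (π : Policy S A) (s : S) (a : A) : ℝ :=
  M.r s a + M.γ * ∑ s', M.P s a s' * M.V π s'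

/-- The advantage function `A_π(s,a) = Q_π(s,a) − V_π(s)`. -/
noncomputable def Adv (M : MDP S A) [DecidableEq S] (π : Policy S A) (s : S) (a : A) : ℝ :=
  M.Q π s a - M.V π s

/-- The discounted state visitation distribution `d_π(s) = (1−γ) Σ_t γ^t Pr(s_t = s)`. -/
noncomputable def d (M : MDP S A) (π : Policy S A) (s : S) : ℝ :=
  (1 - M.γ) * ∑' t : ℕ, M.γ ^ t * M.stateDist π M.ρ0 t s

end MDP

/-!
Both sides are instances of the performance-difference identity
`Σ_t γ^t E_{s_t ∼ π'}[A^{π'|π}(s_t)] = J(π') − E_{ρ0}[V_π]`, and the two copies of `E_{ρ0}[V_π]`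
cancel. The identity itself holds for an arbitrary potential `v` in place of `V_π`: adding
`γ · E[v(s_{t+1})] − v(s_t)` to the reward changes the discounted return by a telescoping series
whose sum is `−E_μ[v(s_0)]`.
-/

namespace MDP

variable {S A : Type} [Fintype S] [Fintype A] (M : MDP S A) (π : Policy S A)

noncomputable def discountedMean (μ g : S → ℝ) (t : ℕ) : ℝ :=
  M.γ ^ t * ∑ s, M.stateDist π μ t s * g s

lemma sum_abs_stateDist_le (μ : S → ℝ) (t : ℕ) :
    ∑ s, |M.stateDist π μ t s| ≤ ∑ s, |μ s| := by
  induction t with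
  | zero => rfl
  | succ t ih =>
    calc ∑ s', |∑ s, ∑ a, M.stateDist π μ t s * π.p s a * M.P s a s'|
        ≤ ∑ s', ∑ s, ∑ a, |M.stateDist π μ t s| * π.p s a * M.P s a s' := by
          refine Finset.sum_le_sum fun s' _ => (Finset.abs_sum_le_sum_abs _ _).trans <|
            Finset.sum_le_sum fun s _ => (Finset.abs_sum_le_sum_abs _ _).trans_eq <|
              Finset.sum_congr rfl fun a _ => ?_
          rw [abs_mul, abs_mul, abs_of_nonneg (π.nonneg s a), abs_of_nonneg (M.P_nonneg s a s')]
      _ = ∑ s, |M.stateDist π μ t s| := by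
          rw [Finset.sum_comm]
          refine Finset.sum_congr rfl fun s _ => ?_
          simp only [Finset.sum_comm (γ := S), ← Finset.mul_sum, M.P_sum_one, mul_one,
            π.sum_one]
      _ ≤ ∑ s, |μ s| := ih

lemma abs_sum_stateDist_mul_le (μ g : S → ℝ) (t : ℕ) :
    |∑ s, M.stateDist π μ t s * g s| ≤ (∑ s, |μ s|) * ∑ s, |g s| :=
  calc |∑ s, M.stateDist π μ t s * g s|
      ≤ ∑ s, |M.stateDist π μ t s| * ∑ s', |g s'| := by
        refine (Finset.abs_sum_le_sum_abs _ _).trans <| Finset.sum_le_sum fun s _ => ?_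
        rw [abs_mul]
        exact mul_le_mul_of_nonneg_left
          (Finset.single_le_sum (fun s' _ => abs_nonneg (g s')) (Finset.mem_univ s))
          (abs_nonneg _)
    _ ≤ (∑ s, |μ s|) * ∑ s, |g s| := by
        rw [← Finset.sum_mul]
        exact mul_le_mul_of_nonneg_right (M.sum_abs_stateDist_le π μ t)
          (Finset.sum_nonneg fun s _ => abs_nonneg (g s))

lemma summable_discountedMean (μ g : S → ℝ) : Summable (M.discountedMean π μ g) := by
  refine Summable.of_norm_bounded
    ((summable_geometric_of_lt_one M.γ_pos.le M.γ_lt_one).mul_left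
      ((∑ s, |μ s|) * ∑ s, |g s|)) fun t => ?_
  rw [Real.norm_eq_abs, discountedMean, abs_mul, abs_of_pos (pow_pos M.γ_pos t), mul_comm]
  exact mul_le_mul_of_nonneg_right (M.abs_sum_stateDist_mul_le π μ g t)
    (pow_pos M.γ_pos t).le

lemma hasSum_discountedMean_succ_sub (μ g : S → ℝ) :
    HasSum (fun t => M.discountedMean π μ g (t + 1) - M.discountedMean π μ g t)
      (-∑ s, μ s * g s) := by
  have hg := M.summable_discountedMean π μ g
  have hshift := (summable_nat_add_iff 1).mpr hg
  have h := (hshift.sub hg).hasSum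
  rw [hshift.tsum_sub hg, hg.tsum_eq_zero_add, sub_add_cancel_right] at h
  simpa [discountedMean, stateDist] using h

lemma sum_stateDist_succ_mul (μ v : S → ℝ) (t : ℕ) :
    ∑ s', M.stateDist π μ (t + 1) s' * v s' =
      ∑ s, M.stateDist π μ t s * ∑ a, π.p s a * ∑ s', M.P s a s' * v s' := by
  simp only [stateDist, Finset.sum_mul, Finset.mul_sum]
  rw [Finset.sum_comm]
  refine Finset.sum_congr rfl fun s _ => ?_
  rw [Finset.sum_comm]
  exact Finset.sum_congr rfl fun a _ => Finset.sum_congr rfl fun s' _ => by ring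

lemma expSum_eq_tsum_discountedMean (μ : S → ℝ) (f : S → A → ℝ) :
    M.expSum π μ f = ∑' t, M.discountedMean π μ (fun s => ∑ a, π.p s a * f s a) t := by
  refine tsum_congr fun t => congrArg (M.γ ^ t * ·) <| Finset.sum_congr rfl fun s _ => ?_
  rw [Finset.mul_sum]
  exact Finset.sum_congr rfl fun a _ => mul_assoc _ _ _

lemma expSum_shaped (μ v : S → ℝ) (f : S → A → ℝ) :
    M.expSum π μ (fun s a => f s a + M.γ * ∑ s', M.P s a s' * v s' - v s) =
      M.expSum π μ f - ∑ s, μ s * v s := by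
  have hterm : ∀ t,
      M.discountedMean π μ (fun s => ∑ a, π.p s a *
          (f s a + M.γ * ∑ s', M.P s a s' * v s' - v s)) t =
        M.discountedMean π μ (fun s => ∑ a, π.p s a * f s a) t +
          (M.discountedMean π μ v (t + 1) - M.discountedMean π μ v t) := by
    intro t
    have hstate : ∀ s, ∑ a, π.p s a * (f s a + M.γ * ∑ s', M.P s a s' * v s' - v s) =
        ∑ a, π.p s a * f s a + M.γ * ∑ a, π.p s a * ∑ s', M.P s a s' * v s' - v s := by
      intro s
      simp only [mul_sub, mul_add, Finset.sum_sub_distrib, Finset.sum_add_distrib,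
        ← Finset.sum_mul, π.sum_one, one_mul, Finset.mul_sum, mul_left_comm (π.p s _) M.γ]
    simp only [discountedMean, hstate]
    simp only [M.sum_stateDist_succ_mul, mul_add, mul_sub,
      Finset.sum_add_distrib, Finset.sum_sub_distrib, mul_left_comm _ M.γ, ← Finset.mul_sum]
    ring
  rw [M.expSum_eq_tsum_discountedMean, M.expSum_eq_tsum_discountedMean, tsum_congr hterm,
    ((M.summable_discountedMean π μ _).hasSum.add
      (M.hasSum_discountedMean_succ_sub π μ v)).tsum_eq, sub_eq_add_neg]

lemma performance_difference [DecidableEq S] (π' : Policy S A) :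
    ∑' t : ℕ, M.γ ^ t * ∑ s, M.stateDist π' M.ρ0 t s * ∑ a, π'.p s a * M.Adv π s a =
      M.J π' - ∑ s, M.ρ0 s * M.V π s :=
  -- `M.Adv π` unfolds to `M.r` shaped by the potential `M.V π`
  (M.expSum_eq_tsum_discountedMean π' M.ρ0 (M.Adv π)).symm.trans
    (M.expSum_shaped π' M.ρ0 (M.V π) M.r)

end MDP

theorem three_policy_decomposition_general {S A : Type} [Fintype S] [Fintype A]
    [DecidableEq S]
    (M : MDP S A) (π πTilde πb : Policy S A) :
    M.J πTilde - M.J πb =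
      (∑' t : ℕ, M.γ ^ t * ∑ s, M.stateDist πTilde M.ρ0 t s *
          ∑ a, πTilde.p s a * M.Adv π s a) -
      (∑' t : ℕ, M.γ ^ t * ∑ s, M.stateDist πb M.ρ0 t s *
          ∑ a, πb.p s a * M.Adv π s a) := by
  rw [M.performance_difference π πTilde, M.performance_difference π πb]
  ring

/-- Three-policy return-decomposition identity: for any stationary stochastic policies
`π`, `π̃`, `π_b`,
`J(π̃) − J(π_b) = E_{τ∼π̃}[Σ_t γ^t A^{π̃|π}(s_t)] − E_{τ∼π_b}[Σ_t γ^t A^{π_b|π}(s_t)]`,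
where `A^{π1|π2}(s) = E_{a∼π1(·|s)}[A_{π2}(s,a)]`. -/
theorem three_policy_decomposition {S A : Type} [Fintype S] [Fintype A]
    [Nonempty S] [Nonempty A] [DecidableEq S]
    (M : MDP S A) (π πTilde πb : Policy S A) :
    M.J πTilde - M.J πb =
      (∑' t : ℕ, M.γ ^ t * ∑ s, M.stateDist πTilde M.ρ0 t s *
          ∑ a, πTilde.p s a * M.Adv π s a) -
      (∑' t : ℕ, M.γ ^ t * ∑ s, M.stateDist πb M.ρ0 t s *
          ∑ a, πb.p s a * M.Adv π s a) :=
  three_policy_decomposition_general M π πTilde πb
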